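/- The CFRD expression for the Gaussian behaviour μ_{x,y} = (1/2)[N_{(ℓ,(-1)^{xy}ℓ),σ} + N_{(-ℓ,-(-1)^{xy}ℓ),σ}], namely [⟨A₀B₀⟩ − ⟨A₁B₁⟩]² + [⟨A₀B₁⟩ + ⟨A₁B₀⟩]² − Σ_{x,y} ⟨A_x² B_y²⟩, equals 8ℓ⁴ − 4(σ² + ℓ²)², and this quantity is strictly positive if and only if ℓ²/σ² > 1 + √2. -/
import Mathlib


open MeasureTheory Real
open scoped ENNReal

lemma int0 {b : ℝ} (hb : 0 < b) : ∫ x : ℝ, exp (-b * x ^ 2) = √(π / b) :=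
  integral_gaussian b

lemma int1 {b : ℝ} : ∫ x : ℝ, x * exp (-b * x ^ 2) = 0 := by
  have h := MeasureTheory.integral_neg_eq_self (fun x : ℝ => x * exp (-b * x ^ 2)) (volume : Measure ℝ)
  simp only [neg_sq, neg_mul] at h
  rw [integral_neg] at h
  simp only [neg_mul] at h ⊢
  linarith

lemma int2 {b : ℝ} (hb : 0 < b) : ∫ x : ℝ, x ^ 2 * exp (-b * x ^ 2) = √(π / b) / (2 * b) := by
  have h2 : ∫ x : ℝ in Set.Ioi 0, x ^ (2:ℝ) * exp (-b * x ^ (2:ℝ)) =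
      b ^ (-((2:ℝ)+1)/2) * (1/2) * Real.Gamma (((2:ℝ)+1)/2) :=
    integral_rpow_mul_exp_neg_mul_rpow (by norm_num) (by norm_num) hb
  have hnat : ∀ x : ℝ, x ^ (2:ℝ) = x ^ (2:ℕ) := fun x => by
    rw [show ((2:ℝ) = ((2:ℕ):ℝ)) by norm_num, Real.rpow_natCast]
  simp only [hnat] at h2
  have habs : ∫ x : ℝ, x ^ 2 * exp (-b * x ^ 2) =
      2 * ∫ x : ℝ in Set.Ioi 0, x ^ 2 * exp (-b * x ^ 2) := by
    rw [← integral_comp_abs (f := fun x : ℝ => x ^ 2 * exp (-b * x ^ 2))]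
    simp [sq_abs]
  rw [habs, h2]
  have hG : Real.Gamma (((2:ℝ)+1)/2) = √π / 2 := by
    rw [show (((2:ℝ)+1)/2) = (1/2 + 1) by norm_num, Real.Gamma_add_one (by norm_num),
      Real.Gamma_one_half_eq]
    ring
  have h3 : b ^ (-((2:ℝ)+1)/2) = (b * √b)⁻¹ := by
    rw [show (-((2:ℝ)+1)/2) = -(1 + 1/2) by norm_num, Real.rpow_neg hb.le,
      Real.rpow_add hb, Real.rpow_one, ← Real.sqrt_eq_rpow]
  have hsb : (0:ℝ) < √b := Real.sqrt_pos.2 hb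
  have hsq : √b * √b = b := Real.mul_self_sqrt hb.le
  rw [hG, h3, Real.sqrt_div Real.pi_nonneg]
  field_simp

lemma integ0 {b : ℝ} (hb : 0 < b) : Integrable fun x : ℝ => exp (-b * x ^ 2) :=
  integrable_exp_neg_mul_sq hb

lemma integ1 {b : ℝ} (hb : 0 < b) : Integrable fun x : ℝ => x * exp (-b * x ^ 2) :=
  integrable_mul_exp_neg_mul_sq hb

lemma integ2 {b : ℝ} (hb : 0 < b) : Integrable fun x : ℝ => x ^ 2 * exp (-b * x ^ 2) := by
  have := integrable_rpow_mul_exp_neg_mul_sq hb (s := 2) (by norm_num)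
  have hnat : ∀ x : ℝ, x ^ (2:ℝ) = x ^ (2:ℕ) := fun x => by
    rw [show ((2:ℝ) = ((2:ℕ):ℝ)) by norm_num, Real.rpow_natCast]
  simpa only [hnat] using this

-- shifted versions
lemma integS {b a : ℝ} (hb : 0 < b) (n : ℕ) (hn : n ≤ 2) :
    Integrable fun x : ℝ => x ^ n * exp (-b * (x - a) ^ 2) := by
  have h : Integrable fun x : ℝ => (x + a) ^ n * exp (-b * x ^ 2) := by
    interval_cases n
    · simpa using integ0 hb
    · simp only [pow_one, add_mul]
      exact (integ1 hb).add ((integ0 hb).const_mul a)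
    · have : ∀ x : ℝ, (x + a) ^ 2 * exp (-b * x ^ 2) =
        x ^ 2 * exp (-b * x ^ 2) + (2*a) * (x * exp (-b * x ^ 2)) + a ^ 2 * exp (-b * x ^ 2) := by
        intro x; ring
      simp only [this]
      exact (((integ2 hb).add ((integ1 hb).const_mul (2*a))).add ((integ0 hb).const_mul (a^2)))
  have h2 := h.comp_sub_right a
  simpa using h2

lemma intS0 {b a : ℝ} (hb : 0 < b) : ∫ x : ℝ, exp (-b * (x - a) ^ 2) = √(π / b) := by
  rw [← MeasureTheory.integral_add_right_eq_self (fun x => exp (-b * (x - a)^2)) a]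
  simpa using int0 hb

lemma intS1 {b a : ℝ} (hb : 0 < b) : ∫ x : ℝ, x * exp (-b * (x - a) ^ 2) = a * √(π / b) := by
  rw [← MeasureTheory.integral_add_right_eq_self (fun x => x * exp (-b * (x - a)^2)) a]
  simp only [add_sub_cancel_right, add_mul]
  rw [integral_add (integ1 hb) ((integ0 hb).const_mul a), int1, integral_const_mul, int0 hb]
  ring

lemma intS2 {b a : ℝ} (hb : 0 < b) :
    ∫ x : ℝ, x ^ 2 * exp (-b * (x - a) ^ 2) = (a ^ 2 + 1 / (2 * b)) * √(π / b) := by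
  rw [← MeasureTheory.integral_add_right_eq_self (fun x => x ^ 2 * exp (-b * (x - a)^2)) a]
  simp only [add_sub_cancel_right]
  have : ∀ x : ℝ, (x + a) ^ 2 * exp (-b * x ^ 2) =
      x ^ 2 * exp (-b * x ^ 2) + ((2*a) * (x * exp (-b * x ^ 2)) + a ^ 2 * exp (-b * x ^ 2)) := by
    intro x; ring
  simp only [this]
  have hI : Integrable (fun x : ℝ => (2*a) * (x * exp (-b * x ^ 2)) + a ^ 2 * exp (-b * x ^ 2)) :=
    ((integ1 hb).const_mul (2*a)).add ((integ0 hb).const_mul (a^2))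
  rw [integral_add (integ2 hb) hI,
    integral_add ((integ1 hb).const_mul (2*a)) ((integ0 hb).const_mul (a^2)),
    integral_const_mul, integral_const_mul, int0 hb, int1, int2 hb]
  field_simp
  ring

/-- Isotropic 2D Gaussian probability measure centred at `(a,b)` with width `σ`. -/
noncomputable def gauss2 (a b σ : ℝ) : Measure (ℝ × ℝ) :=
  (volume : Measure (ℝ × ℝ)).withDensity fun p =>
    ENNReal.ofReal ((1 / (2 * π * σ ^ 2)) *
      Real.exp (-(((a - p.1) ^ 2 + (b - p.2) ^ 2) / (2 * σ ^ 2))))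

lemma gauss2_mom (a c σ : ℝ) (hσ : 0 < σ) (m n : ℕ) :
    ∫ p : ℝ × ℝ, p.1 ^ m * p.2 ^ n ∂(gauss2 a c σ) =
      (1 / (2 * π * σ ^ 2)) *
        ((∫ x : ℝ, x ^ m * exp (-(2 * σ ^ 2)⁻¹ * (x - a) ^ 2)) *
         (∫ y : ℝ, y ^ n * exp (-(2 * σ ^ 2)⁻¹ * (y - c) ^ 2))) := by
  set C : ℝ := 1 / (2 * π * σ ^ 2) with hC
  set b : ℝ := (2 * σ ^ 2)⁻¹ with hb
  set ρ : ℝ × ℝ → ℝ := fun p =>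
    C * Real.exp (-(((a - p.1) ^ 2 + (c - p.2) ^ 2) / (2 * σ ^ 2))) with hρ
  have hρ0 : ∀ p, 0 ≤ ρ p := by
    intro p
    have hC0 : 0 ≤ C := by positivity
    positivity
  have hρm : Measurable fun p : ℝ × ℝ => (ρ p).toNNReal := by fun_prop
  have h1 : gauss2 a c σ = volume.withDensity fun p => ((ρ p).toNNReal : ℝ≥0∞) := rfl
  rw [h1, integral_withDensity_eq_integral_smul hρm]
  have key : ∀ p : ℝ × ℝ, (ρ p).toNNReal • (p.1 ^ m * p.2 ^ n) =
      C * ((p.1 ^ m * exp (-b * (p.1 - a) ^ 2)) * (p.2 ^ n * exp (-b * (p.2 - c) ^ 2))) := by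
    intro p
    rw [NNReal.smul_def, Real.coe_toNNReal _ (hρ0 p)]
    have harg : -(((a - p.1) ^ 2 + (c - p.2) ^ 2) / (2 * σ ^ 2)) =
        -b * (p.1 - a) ^ 2 + -b * (p.2 - c) ^ 2 := by
      rw [hb]
      field_simp
      ring
    simp only [hρ]
    rw [harg, Real.exp_add, smul_eq_mul]
    ring
  simp only [key]
  rw [MeasureTheory.integral_const_mul, Measure.volume_eq_prod]
  congr 1
  exact integral_prod_mul (μ := volume) (ν := volume)
    (f := fun x : ℝ => x ^ m * exp (-b * (x - a) ^ 2))
    (g := fun y : ℝ => y ^ n * exp (-b * (y - c) ^ 2))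

lemma gauss2_integrable (a c σ : ℝ) (hσ : 0 < σ) (m n : ℕ) (hm : m ≤ 2) (hn : n ≤ 2) :
    Integrable (fun p : ℝ × ℝ => p.1 ^ m * p.2 ^ n) (gauss2 a c σ) := by
  set C : ℝ := 1 / (2 * π * σ ^ 2) with hC
  set b : ℝ := (2 * σ ^ 2)⁻¹ with hb
  have hbpos : 0 < b := by rw [hb]; positivity
  set ρ : ℝ × ℝ → ℝ := fun p =>
    C * Real.exp (-(((a - p.1) ^ 2 + (c - p.2) ^ 2) / (2 * σ ^ 2))) with hρ
  have hρ0 : ∀ p, 0 ≤ ρ p := by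
    intro p
    have hC0 : 0 ≤ C := by positivity
    positivity
  have hρm : Measurable fun p : ℝ × ℝ => (ρ p).toNNReal := by fun_prop
  have h1 : gauss2 a c σ = volume.withDensity fun p => ((ρ p).toNNReal : ℝ≥0∞) := rfl
  rw [h1, integrable_withDensity_iff_integrable_smul hρm]
  have key : ∀ p : ℝ × ℝ, (ρ p).toNNReal • (p.1 ^ m * p.2 ^ n) =
      C * ((p.1 ^ m * exp (-b * (p.1 - a) ^ 2)) * (p.2 ^ n * exp (-b * (p.2 - c) ^ 2))) := by
    intro p
    rw [NNReal.smul_def, Real.coe_toNNReal _ (hρ0 p)]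
    have harg : -(((a - p.1) ^ 2 + (c - p.2) ^ 2) / (2 * σ ^ 2)) =
        -b * (p.1 - a) ^ 2 + -b * (p.2 - c) ^ 2 := by
      rw [hb]
      field_simp
      ring
    simp only [hρ]
    rw [harg, Real.exp_add, smul_eq_mul]
    ring
  simp only [key]
  rw [Measure.volume_eq_prod]
  exact (((integS hbpos m hm).mul_prod (integS hbpos n hn))).const_mul C

lemma gauss2_const_helper (σ : ℝ) (hσ : 0 < σ) :
    (1 / (2 * π * σ ^ 2)) * (√(π / (2 * σ ^ 2)⁻¹) * √(π / (2 * σ ^ 2)⁻¹)) = 1 := by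
  rw [Real.mul_self_sqrt (by positivity)]
  have hπ : (0:ℝ) < π := Real.pi_pos
  field_simp

lemma gauss2_xy (a c σ : ℝ) (hσ : 0 < σ) :
    ∫ p : ℝ × ℝ, p.1 * p.2 ∂(gauss2 a c σ) = a * c := by
  have h := gauss2_mom a c σ hσ 1 1
  simp only [pow_one] at h
  have hbpos : (0:ℝ) < (2 * σ ^ 2)⁻¹ := by positivity
  rw [h, intS1 hbpos, intS1 hbpos]
  have hC := gauss2_const_helper σ hσ
  set C : ℝ := 1 / (2 * π * σ ^ 2)
  set s : ℝ := √(π / (2 * σ ^ 2)⁻¹)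
  calc C * ((a * s) * (c * s)) = (C * (s * s)) * (a * c) := by ring
  _ = a * c := by rw [hC]; ring

lemma gauss2_x2y2 (a c σ : ℝ) (hσ : 0 < σ) :
    ∫ p : ℝ × ℝ, p.1 ^ 2 * p.2 ^ 2 ∂(gauss2 a c σ) = (σ ^ 2 + a ^ 2) * (σ ^ 2 + c ^ 2) := by
  have h := gauss2_mom a c σ hσ 2 2
  have hbpos : (0:ℝ) < (2 * σ ^ 2)⁻¹ := by positivity
  rw [h, intS2 hbpos, intS2 hbpos]
  have hinv : 1 / (2 * (2 * σ ^ 2)⁻¹) = σ ^ 2 := by field_simp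
  rw [hinv]
  have hC := gauss2_const_helper σ hσ
  set C : ℝ := 1 / (2 * π * σ ^ 2)
  set s : ℝ := √(π / (2 * σ ^ 2)⁻¹)
  calc C * (((a ^ 2 + σ ^ 2) * s) * ((c ^ 2 + σ ^ 2) * s))
      = (C * (s * s)) * ((a ^ 2 + σ ^ 2) * (c ^ 2 + σ ^ 2)) := by ring
  _ = (σ ^ 2 + a ^ 2) * (σ ^ 2 + c ^ 2) := by rw [hC]; ring

/-- The Gaussian behaviour `μ_{x,y} = (1/2)[N_{(ℓ,(-1)^{xy}ℓ),σ} + N_{(-ℓ,-(-1)^{xy}ℓ),σ}]`. -/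
noncomputable def gaussBehaviour (ℓ σ : ℝ) (x y : Fin 2) : Measure (ℝ × ℝ) :=
  (1 / 2 : ℝ≥0∞) • gauss2 ℓ ((-1 : ℝ) ^ ((x : ℕ) * (y : ℕ)) * ℓ) σ +
  (1 / 2 : ℝ≥0∞) • gauss2 (-ℓ) (-((-1 : ℝ) ^ ((x : ℕ) * (y : ℕ)) * ℓ)) σ

lemma behaviour_int (ℓ σ : ℝ) (hσ : 0 < σ) (x y : Fin 2) (m n : ℕ) (hm : m ≤ 2) (hn : n ≤ 2) :
    ∫ p : ℝ × ℝ, p.1 ^ m * p.2 ^ n ∂(gaussBehaviour ℓ σ x y) =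
      (1 / 2) * (∫ p : ℝ × ℝ, p.1 ^ m * p.2 ^ n ∂(gauss2 ℓ ((-1 : ℝ) ^ ((x : ℕ) * (y : ℕ)) * ℓ) σ)) +
      (1 / 2) * (∫ p : ℝ × ℝ, p.1 ^ m * p.2 ^ n
        ∂(gauss2 (-ℓ) (-((-1 : ℝ) ^ ((x : ℕ) * (y : ℕ)) * ℓ)) σ)) := by
  have h1 := (gauss2_integrable ℓ ((-1 : ℝ) ^ ((x : ℕ) * (y : ℕ)) * ℓ) σ hσ m n hm hn).smul_measure
    (c := (1/2 : ℝ≥0∞)) (by norm_num)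
  have h2 := (gauss2_integrable (-ℓ) (-((-1 : ℝ) ^ ((x : ℕ) * (y : ℕ)) * ℓ)) σ hσ m n hm hn).smul_measure
    (c := (1/2 : ℝ≥0∞)) (by norm_num)
  rw [gaussBehaviour, integral_add_measure h1 h2, integral_smul_measure, integral_smul_measure]
  norm_num

/-- The cross-moment `⟨A_x B_y⟩`. -/
noncomputable def E (ℓ σ : ℝ) (x y : Fin 2) : ℝ :=
  ∫ p : ℝ × ℝ, p.1 * p.2 ∂(gaussBehaviour ℓ σ x y)

/-- The second-moment `⟨A_x² B_y²⟩`. -/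
noncomputable def S (ℓ σ : ℝ) (x y : Fin 2) : ℝ :=
  ∫ p : ℝ × ℝ, p.1 ^ 2 * p.2 ^ 2 ∂(gaussBehaviour ℓ σ x y)

lemma E_eq (ℓ σ : ℝ) (hσ : 0 < σ) (x y : Fin 2) :
    E ℓ σ x y = (-1 : ℝ) ^ ((x : ℕ) * (y : ℕ)) * ℓ ^ 2 := by
  have h := behaviour_int ℓ σ hσ x y 1 1 (by norm_num) (by norm_num)
  simp only [pow_one] at h
  rw [E, h, gauss2_xy _ _ _ hσ, gauss2_xy _ _ _ hσ]
  ring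

lemma S_eq (ℓ σ : ℝ) (hσ : 0 < σ) (x y : Fin 2) :
    S ℓ σ x y = (σ ^ 2 + ℓ ^ 2) ^ 2 := by
  have h := behaviour_int ℓ σ hσ x y 2 2 (by norm_num) (by norm_num)
  rw [S, h, gauss2_x2y2 _ _ _ hσ, gauss2_x2y2 _ _ _ hσ]
  have hs : ((-1 : ℝ) ^ ((x : ℕ) * (y : ℕ)) * ℓ) ^ 2 = ℓ ^ 2 := by
    rw [mul_pow, ← pow_mul, mul_comm ((x : ℕ) * (y : ℕ)) 2, pow_mul]
    norm_num
  simp only [neg_sq]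
  rw [hs]
  ring
lemma pos_iff (ℓ σ : ℝ) (hℓ : 0 < ℓ) (hσ : 0 < σ) :
    0 < 8 * ℓ ^ 4 - 4 * (σ ^ 2 + ℓ ^ 2) ^ 2 ↔ 1 + Real.sqrt 2 < ℓ ^ 2 / σ ^ 2 := by
  have hr : Real.sqrt 2 ^ 2 = 2 := Real.sq_sqrt (by norm_num)
  have hr1 : 1 < Real.sqrt 2 := by nlinarith [Real.sqrt_nonneg 2]
  have hσ2 : (0:ℝ) < σ ^ 2 := by positivity
  have hℓ2 : (0:ℝ) < ℓ ^ 2 := by positivity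
  rw [lt_div_iff₀ hσ2]
  constructor
  · intro h
    have h1 : σ ^ 2 + ℓ ^ 2 < Real.sqrt 2 * ℓ ^ 2 := by
      have hsq : (σ ^ 2 + ℓ ^ 2) ^ 2 < (Real.sqrt 2 * ℓ ^ 2) ^ 2 := by nlinarith
      exact lt_of_pow_lt_pow_left₀ 2 (by positivity) hsq
    have h2 : σ ^ 2 < (Real.sqrt 2 - 1) * ℓ ^ 2 := by linarith
    have h3 : (Real.sqrt 2 + 1) * σ ^ 2 < (Real.sqrt 2 + 1) * ((Real.sqrt 2 - 1) * ℓ ^ 2) :=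
      mul_lt_mul_of_pos_left h2 (by positivity)
    have h4 : (Real.sqrt 2 + 1) * ((Real.sqrt 2 - 1) * ℓ ^ 2) = ℓ ^ 2 := by nlinarith [hr]
    nlinarith [h3, h4]
  · intro h
    have h2 : σ ^ 2 < (Real.sqrt 2 - 1) * ℓ ^ 2 := by nlinarith
    have h1 : σ ^ 2 + ℓ ^ 2 < Real.sqrt 2 * ℓ ^ 2 := by linarith
    have hsq : (σ ^ 2 + ℓ ^ 2) ^ 2 < (Real.sqrt 2 * ℓ ^ 2) ^ 2 :=
      pow_lt_pow_left₀ h1 (by positivity) (by norm_num)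
    nlinarith [hsq, hr]

theorem stmt2 (ℓ σ : ℝ) (hℓ : 0 < ℓ) (hσ : 0 < σ) :
    (E ℓ σ 0 0 - E ℓ σ 1 1) ^ 2 + (E ℓ σ 0 1 + E ℓ σ 1 0) ^ 2
        - (S ℓ σ 0 0 + S ℓ σ 0 1 + S ℓ σ 1 0 + S ℓ σ 1 1)
      = 8 * ℓ ^ 4 - 4 * (σ ^ 2 + ℓ ^ 2) ^ 2 ∧
    (0 < (E ℓ σ 0 0 - E ℓ σ 1 1) ^ 2 + (E ℓ σ 0 1 + E ℓ σ 1 0) ^ 2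
        - (S ℓ σ 0 0 + S ℓ σ 0 1 + S ℓ σ 1 0 + S ℓ σ 1 1)
      ↔ 1 + Real.sqrt 2 < ℓ ^ 2 / σ ^ 2) := by
  have e00 : E ℓ σ 0 0 = ℓ ^ 2 := by rw [E_eq ℓ σ hσ]; norm_num
  have e01 : E ℓ σ 0 1 = ℓ ^ 2 := by rw [E_eq ℓ σ hσ]; norm_num
  have e10 : E ℓ σ 1 0 = ℓ ^ 2 := by rw [E_eq ℓ σ hσ]; norm_num
  have e11 : E ℓ σ 1 1 = -ℓ ^ 2 := by rw [E_eq ℓ σ hσ]; norm_num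
  have hmain : (E ℓ σ 0 0 - E ℓ σ 1 1) ^ 2 + (E ℓ σ 0 1 + E ℓ σ 1 0) ^ 2
        - (S ℓ σ 0 0 + S ℓ σ 0 1 + S ℓ σ 1 0 + S ℓ σ 1 1)
      = 8 * ℓ ^ 4 - 4 * (σ ^ 2 + ℓ ^ 2) ^ 2 := by
    rw [e00, e01, e10, e11, S_eq ℓ σ hσ, S_eq ℓ σ hσ, S_eq ℓ σ hσ, S_eq ℓ σ hσ]
    ring
  exact ⟨hmain, by rw [hmain]; exact pos_iff ℓ σ hℓ hσ⟩
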